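/- arXiv:1402.6106 — 6 statements merged into one kernel-verified Lean document; each statement's English description precedes it below -/
import Mathlib

section
/- Let α₁, α₂, α₃ : ℕ → ℝ be nonnegative, bounded, monotone increasing functions with α₁(0) = α₂(0) = α₃(0) = 0 and lim_{c→∞}(α₁(c) + α₂(c)) < 1, and let λ > 0. Define ζⱼ = lim_{c→∞} αⱼ(c) and λ* = ζ₃ / (1 − ζ₁ − ζ₂). Let w : ℕ → ℝ be the unique bounded solution of w(c) = min(α₁(c)·w(c+1) + α₂(c)·w(c−1) + α₃(c), λ). If λ ≥ λ*, then for every c ∈ ℕ, α₁(c)·w(c+1) + α₂(c)·w(c−1) + α₃(c) ≤ λ, and hence w(c) equals the first expression in the minimum for all c. -/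
/-- if `lam ≥ lam*`, the first expression in the minimum never exceeds `lam`,
hence the bounded solution `w` of the minimum equation always equals the first expression. -/
theorem stmt1 (α₁ α₂ α₃ : ℕ → ℝ) (ζ₁ ζ₂ ζ₃ lam lamStar : ℝ)
    (h1 : ∀ c, 0 ≤ α₁ c) (h2 : ∀ c, 0 ≤ α₂ c) (h3 : ∀ c, 0 ≤ α₃ c)
    (hm1 : Monotone α₁) (hm2 : Monotone α₂) (hm3 : Monotone α₃)
    (h10 : α₁ 0 = 0) (h20 : α₂ 0 = 0) (h30 : α₃ 0 = 0)
    (hb1 : ∃ B, ∀ c, α₁ c ≤ B) (hb2 : ∃ B, ∀ c, α₂ c ≤ B) (hb3 : ∃ B, ∀ c, α₃ c ≤ B)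
    (hl1 : Filter.Tendsto α₁ Filter.atTop (nhds ζ₁))
    (hl2 : Filter.Tendsto α₂ Filter.atTop (nhds ζ₂))
    (hl3 : Filter.Tendsto α₃ Filter.atTop (nhds ζ₃))
    (hζ : ζ₁ + ζ₂ < 1)
    (hstar : lamStar = ζ₃ / (1 - ζ₁ - ζ₂))
    (hlam : 0 < lam) (hge : lamStar ≤ lam)
    (w : ℕ → ℝ) (hwbd : ∃ B, ∀ c, |w c| ≤ B)
    (hw : ∀ c, w c = min (α₁ c * w (c + 1) + α₂ c * w (c - 1) + α₃ c) lam) :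
    ∀ c, α₁ c * w (c + 1) + α₂ c * w (c - 1) + α₃ c ≤ lam ∧
      w c = α₁ c * w (c + 1) + α₂ c * w (c - 1) + α₃ c := by
  obtain ⟨B, hB⟩ := hwbd
  -- bounds on α by ζ
  have hle1 : ∀ c, α₁ c ≤ ζ₁ := fun c => hm1.ge_of_tendsto hl1 c
  have hle2 : ∀ c, α₂ c ≤ ζ₂ := fun c => hm2.ge_of_tendsto hl2 c
  have hle3 : ∀ c, α₃ c ≤ ζ₃ := fun c => hm3.ge_of_tendsto hl3 c
  have hz1 : 0 ≤ ζ₁ := ge_of_tendsto' hl1 h1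
  have hz2 : 0 ≤ ζ₂ := ge_of_tendsto' hl2 h2
  have hz3 : 0 ≤ ζ₃ := ge_of_tendsto' hl3 h3
  set M := sSup (Set.range w) with hM
  have hbdd : BddAbove (Set.range w) := by
    refine ⟨B, ?_⟩
    rintro x ⟨c, rfl⟩
    exact (abs_le.mp (hB c)).2
  have hwM : ∀ c, w c ≤ M := fun c => le_csSup hbdd ⟨c, rfl⟩
  have hw0 : w 0 = 0 := by
    have := hw 0
    simp [h10, h20, h30, le_of_lt hlam] at this
    exact this
  have hM0 : 0 ≤ M := hw0 ▸ hwM 0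
  have key : ∀ c, α₁ c * w (c + 1) + α₂ c * w (c - 1) + α₃ c ≤ (ζ₁ + ζ₂) * M + ζ₃ := by
    intro c
    have t1 : α₁ c * w (c + 1) ≤ ζ₁ * M := by
      calc α₁ c * w (c + 1) ≤ α₁ c * M := mul_le_mul_of_nonneg_left (hwM _) (h1 c)
        _ ≤ ζ₁ * M := mul_le_mul_of_nonneg_right (hle1 c) hM0
    have t2 : α₂ c * w (c - 1) ≤ ζ₂ * M := by
      calc α₂ c * w (c - 1) ≤ α₂ c * M := mul_le_mul_of_nonneg_left (hwM _) (h2 c)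
        _ ≤ ζ₂ * M := mul_le_mul_of_nonneg_right (hle2 c) hM0
    nlinarith [hle3 c]
  have hMrec : M ≤ (ζ₁ + ζ₂) * M + ζ₃ := by
    apply csSup_le (Set.range_nonempty w)
    rintro x ⟨c, rfl⟩
    calc w c ≤ α₁ c * w (c + 1) + α₂ c * w (c - 1) + α₃ c := (hw c).le.trans (min_le_left _ _)
      _ ≤ (ζ₁ + ζ₂) * M + ζ₃ := key c
  have hden : 0 < 1 - ζ₁ - ζ₂ := by linarith
  have hMstar : M ≤ lamStar := by
    rw [hstar, le_div_iff₀ hden]; nlinarith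
  intro c
  have hmain : α₁ c * w (c + 1) + α₂ c * w (c - 1) + α₃ c ≤ lam := by
    have : (ζ₁ + ζ₂) * M + ζ₃ ≤ lam := by
      have hls : lamStar * (1 - ζ₁ - ζ₂) = ζ₃ := by
        rw [hstar]; field_simp
      nlinarith [hge]
    exact (key c).trans this
  exact ⟨hmain, (hw c).trans (min_eq_left hmain)⟩
end

section
/- Let α₁, α₂, α₃ : ℕ → ℝ be nonnegative, bounded, monotone increasing functions with α₁(0) = α₂(0) = α₃(0) = 0 and lim_{c→∞}(α₁(c) + α₂(c)) < 1, and let 0 < λ < λ* where λ* = ζ₃/(1 − ζ₁ − ζ₂) with ζⱼ = lim_{c→∞} αⱼ(c). Let w be the unique bounded solution of w(c) = min(α₁(c)·w(c+1) + α₂(c)·w(c−1) + α₃(c), λ). Then there exists c* ∈ ℕ, c* ≥ 1, such that α₁(c)·w(c+1) + α₂(c)·w(c−1) + α₃(c) > λ if and only if c ≥ c*. -/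
/-- if `0 < lam < lam*`, then there is a threshold `cstar ≥ 1` such that the
continuation expression strictly exceeds `lam` exactly for `c ≥ cstar`. -/
theorem stmt2 (α₁ α₂ α₃ : ℕ → ℝ) (ζ₁ ζ₂ ζ₃ lam lamStar : ℝ)
    (h1 : ∀ c, 0 ≤ α₁ c) (h2 : ∀ c, 0 ≤ α₂ c) (h3 : ∀ c, 0 ≤ α₃ c)
    (hm1 : Monotone α₁) (hm2 : Monotone α₂) (hm3 : Monotone α₃)
    (h10 : α₁ 0 = 0) (h20 : α₂ 0 = 0) (h30 : α₃ 0 = 0)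
    (hb1 : ∃ B, ∀ c, α₁ c ≤ B) (hb2 : ∃ B, ∀ c, α₂ c ≤ B) (hb3 : ∃ B, ∀ c, α₃ c ≤ B)
    (hl1 : Filter.Tendsto α₁ Filter.atTop (nhds ζ₁))
    (hl2 : Filter.Tendsto α₂ Filter.atTop (nhds ζ₂))
    (hl3 : Filter.Tendsto α₃ Filter.atTop (nhds ζ₃))
    (hζ : ζ₁ + ζ₂ < 1)
    (hstar : lamStar = ζ₃ / (1 - ζ₁ - ζ₂))
    (hlam : 0 < lam) (hlt : lam < lamStar)
    (w : ℕ → ℝ) (hwbd : ∃ B, ∀ c, |w c| ≤ B)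
    (hw : ∀ c, w c = min (α₁ c * w (c + 1) + α₂ c * w (c - 1) + α₃ c) lam) :
    ∃ cstar : ℕ, 1 ≤ cstar ∧
      ∀ c, lam < α₁ c * w (c + 1) + α₂ c * w (c - 1) + α₃ c ↔ cstar ≤ c := by
  obtain ⟨B, hB⟩ := hwbd
  have hB0 : 0 ≤ B := le_trans (abs_nonneg _) (hB 0)
  -- bounds on the α's
  have hub1 : ∀ c, α₁ c ≤ ζ₁ := fun c => hm1.ge_of_tendsto hl1 c
  have hub2 : ∀ c, α₂ c ≤ ζ₂ := fun c => hm2.ge_of_tendsto hl2 c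
  have hz1 : (0:ℝ) ≤ ζ₁ := le_trans (h1 0) (hub1 0)
  have hz2 : (0:ℝ) ≤ ζ₂ := le_trans (h2 0) (hub2 0)
  set q : ℝ := ζ₁ + ζ₂ with hqdef
  have hq0 : 0 ≤ q := add_nonneg hz1 hz2
  have hq1 : q < 1 := hζ
  -- the Bellman operator
  set T : (ℕ → ℝ) → ℕ → ℝ :=
    fun v c => min (α₁ c * v (c + 1) + α₂ c * v (c - 1) + α₃ c) lam with hT
  set v : ℕ → ℕ → ℝ := fun n => T^[n] (fun _ => 0) with hv
  have hv0 : v 0 = fun _ => 0 := rfl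
  have hvs : ∀ n c, v (n + 1) c = T (v n) c := by
    intro n c
    simp only [hv, Function.iterate_succ_apply']
  -- T preserves nonnegativity
  have hTnn : ∀ u : ℕ → ℝ, (∀ c, 0 ≤ u c) → ∀ c, 0 ≤ T u c := by
    intro u hu c
    refine le_min ?_ hlam.le
    have e1 := mul_nonneg (h1 c) (hu (c + 1))
    have e2 := mul_nonneg (h2 c) (hu (c - 1))
    linarith [h3 c]
  -- T preserves monotonicity (on nonneg functions)
  have hTmono : ∀ u : ℕ → ℝ, (∀ c, 0 ≤ u c) → Monotone u → Monotone (T u) := by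
    intro u hu humono a b hab
    refine min_le_min ?_ le_rfl
    exact add_le_add (add_le_add
      (mul_le_mul (hm1 hab) (humono (by omega)) (hu _) (h1 b))
      (mul_le_mul (hm2 hab) (humono (by omega)) (hu _) (h2 b))) (hm3 hab)
  have hvnn : ∀ n c, 0 ≤ v n c := by
    intro n
    induction n with
    | zero => intro c; simp [hv0]
    | succ n ih => intro c; rw [hvs]; exact hTnn (v n) ih c
  have hvmono : ∀ n, Monotone (v n) := by
    intro n
    induction n with
    | zero => intro a b _; simp [hv0]
    | succ n ih =>
      have := hTmono (v n) (hvnn n) ih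
      intro a b hab
      rw [hvs, hvs]; exact this hab
  -- contraction estimate: |v n c - w c| ≤ q^n * B
  have hcontr : ∀ n c, |v n c - w c| ≤ q ^ n * B := by
    intro n
    induction n with
    | zero => intro c; simpa [hv0] using hB c
    | succ n ih =>
      intro c
      rw [hvs]
      have hwc : w c = T w c := by rw [hT]; exact hw c
      rw [hwc]
      have key : |T (v n) c - T w c| ≤
          α₁ c * |v n (c + 1) - w (c + 1)| + α₂ c * |v n (c - 1) - w (c - 1)| := by
        have h := abs_min_sub_min_le_max (α₁ c * v n (c + 1) + α₂ c * v n (c - 1) + α₃ c)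
          lam (α₁ c * w (c + 1) + α₂ c * w (c - 1) + α₃ c) lam
        simp only [sub_self, abs_zero] at h
        refine le_trans h (max_le ?_ (add_nonneg (mul_nonneg (h1 c) (abs_nonneg _))
          (mul_nonneg (h2 c) (abs_nonneg _))))
        have : α₁ c * v n (c + 1) + α₂ c * v n (c - 1) + α₃ c -
            (α₁ c * w (c + 1) + α₂ c * w (c - 1) + α₃ c)
            = α₁ c * (v n (c + 1) - w (c + 1)) + α₂ c * (v n (c - 1) - w (c - 1)) := by ring
        rw [this]
        refine le_trans (abs_add_le _ _) ?_
        rw [abs_mul, abs_mul, abs_of_nonneg (h1 c), abs_of_nonneg (h2 c)]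
      refine le_trans key ?_
      have e1 : α₁ c * |v n (c + 1) - w (c + 1)| ≤ α₁ c * (q ^ n * B) :=
        mul_le_mul_of_nonneg_left (ih _) (h1 c)
      have e2 : α₂ c * |v n (c - 1) - w (c - 1)| ≤ α₂ c * (q ^ n * B) :=
        mul_le_mul_of_nonneg_left (ih _) (h2 c)
      have hqnB : 0 ≤ q ^ n * B := by positivity
      calc α₁ c * |v n (c + 1) - w (c + 1)| + α₂ c * |v n (c - 1) - w (c - 1)|
          ≤ α₁ c * (q ^ n * B) + α₂ c * (q ^ n * B) := add_le_add e1 e2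
        _ = (α₁ c + α₂ c) * (q ^ n * B) := by ring
        _ ≤ q * (q ^ n * B) :=
            mul_le_mul_of_nonneg_right (add_le_add (hub1 c) (hub2 c)) hqnB
        _ = q ^ (n + 1) * B := by ring
  -- pointwise convergence v n c → w c
  have hconv : ∀ c, Filter.Tendsto (fun n => v n c) Filter.atTop (nhds (w c)) := by
    intro c
    have h0 : Filter.Tendsto (fun n : ℕ => q ^ n * B) Filter.atTop (nhds 0) := by
      simpa using (tendsto_pow_atTop_nhds_zero_of_lt_one hq0 hq1).mul_const B
    have : Filter.Tendsto (fun n => v n c - w c) Filter.atTop (nhds 0) :=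
      squeeze_zero_norm (fun n => hcontr n c) h0
    simpa using this.add_const (w c)
  -- w is monotone and nonnegative, and ≤ lam
  have hwmono : Monotone w := by
    intro a b hab
    exact le_of_tendsto_of_tendsto' (hconv a) (hconv b) (fun n => hvmono n hab)
  have hwnn : ∀ c, 0 ≤ w c := by
    intro c
    exact ge_of_tendsto' (hconv c) (fun n => hvnn n c)
  have hwlam : ∀ c, w c ≤ lam := fun c => (hw c).trans_le (min_le_right _ _)
  -- the continuation expression g is monotone
  set g : ℕ → ℝ := fun c => α₁ c * w (c + 1) + α₂ c * w (c - 1) + α₃ c with hg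
  have hgmono : Monotone g := by
    intro a b hab
    exact add_le_add (add_le_add
      (mul_le_mul (hm1 hab) (hwmono (by omega)) (hwnn _) (h1 b))
      (mul_le_mul (hm2 hab) (hwmono (by omega)) (hwnn _) (h2 b))) (hm3 hab)
  -- the exceedance set is nonempty
  have hex : ∃ c, lam < g c := by
    by_contra hcon
    push_neg at hcon
    have hweq : ∀ c, w c = g c := fun c => (hw c).trans (min_eq_left (hcon c))
    have hbdd : BddAbove (Set.range w) := ⟨lam, by rintro x ⟨c, rfl⟩; exact hwlam c⟩
    set L : ℝ := ⨆ c, w c with hLdef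
    have hLw : Filter.Tendsto w Filter.atTop (nhds L) := tendsto_atTop_ciSup hwmono hbdd
    have hLlam : L ≤ lam := ciSup_le hwlam
    have hsucc : Filter.Tendsto (fun c => w (c + 1)) Filter.atTop (nhds L) :=
      hLw.comp (Filter.tendsto_add_atTop_nat 1)
    have hpred : Filter.Tendsto (fun c => w (c - 1)) Filter.atTop (nhds L) :=
      hLw.comp (Filter.tendsto_sub_atTop_nat 1)
    have hglim : Filter.Tendsto g Filter.atTop (nhds (ζ₁ * L + ζ₂ * L + ζ₃)) :=
      ((hl1.mul hsucc).add (hl2.mul hpred)).add hl3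
    have hweq' : Filter.Tendsto w Filter.atTop (nhds (ζ₁ * L + ζ₂ * L + ζ₃)) := by
      have : w = g := funext hweq
      rw [this]; exact hglim
    have hLeq : L = ζ₁ * L + ζ₂ * L + ζ₃ := tendsto_nhds_unique hLw hweq'
    have hne : (1 : ℝ) - ζ₁ - ζ₂ ≠ 0 := by
      have : 0 < 1 - (ζ₁ + ζ₂) := by linarith
      intro h; rw [show (1:ℝ) - ζ₁ - ζ₂ = 1 - (ζ₁ + ζ₂) by ring] at h; linarith
    have hLval : L = lamStar := by
      rw [hstar]
      field_simp
      linarith [hLeq]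
    linarith [hlt, hLlam, hLval]
  -- conclude with Nat.find
  refine ⟨Nat.find hex, ?_, ?_⟩
  · by_contra hcon
    push_neg at hcon
    interval_cases h : Nat.find hex
    have := Nat.find_spec hex
    rw [h] at this
    simp only [hg, h10, h20, h30, zero_mul, add_zero, zero_add] at this
    linarith
  · intro c
    constructor
    · intro hc
      exact Nat.find_le hc
    · intro hc
      exact lt_of_lt_of_le (Nat.find_spec hex) (hgmono hc)
end

section
/- Under the assumptions of the previous threshold lemma, the unique bounded solution w of w(c) = min(α₁(c)·w(c+1) + α₂(c)·w(c−1) + α₃(c), λ) is monotone increasing in c. -/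
/-- the unique bounded solution `w` of the minimum equation is monotone
increasing in `c`. -/
theorem stmt3 (α₁ α₂ α₃ : ℕ → ℝ) (d lam : ℝ)
    (h1 : ∀ c, 0 ≤ α₁ c) (h2 : ∀ c, 0 ≤ α₂ c) (h3 : ∀ c, 0 ≤ α₃ c)
    (hm1 : Monotone α₁) (hm2 : Monotone α₂) (hm3 : Monotone α₃)
    (h10 : α₁ 0 = 0) (h20 : α₂ 0 = 0) (h30 : α₃ 0 = 0)
    (hb3 : ∃ B, ∀ c, α₃ c ≤ B)
    (hd : d < 1) (hsum : ∀ c, α₁ c + α₂ c ≤ d)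
    (hlam : 0 < lam)
    (w : ℕ → ℝ) (hwbd : ∃ B, ∀ c, |w c| ≤ B)
    (hw : ∀ c, w c = min (α₁ c * w (c + 1) + α₂ c * w (c - 1) + α₃ c) lam) :
    Monotone w := by
  obtain ⟨B, hB⟩ := hwbd
  have hd0 : 0 ≤ d := le_trans (by have := h1 0; have := h2 0; linarith) (hsum 0)
  -- w is nonnegative
  have hwlo : ∀ c, -B ≤ w c := fun c => (abs_le.mp (hB c)).1
  have hwhi : ∀ c, w c ≤ B := fun c => (abs_le.mp (hB c)).2
  set m := sInf (Set.range w) with hm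
  have hne : (Set.range w).Nonempty := ⟨w 0, 0, rfl⟩
  have hbdd : BddBelow (Set.range w) := ⟨-B, by rintro x ⟨c, rfl⟩; exact hwlo c⟩
  have hmle : ∀ c, m ≤ w c := fun c => csInf_le hbdd ⟨c, rfl⟩
  have hm0 : 0 ≤ m := by
    by_contra hmneg
    push_neg at hmneg
    have key : ∀ c, d * m ≤ w c := by
      intro c
      rw [hw c]
      refine le_min ?_ (by nlinarith)
      have e1 : α₁ c * m ≤ α₁ c * w (c + 1) := mul_le_mul_of_nonneg_left (hmle _) (h1 c)
      have e2 : α₂ c * m ≤ α₂ c * w (c - 1) := mul_le_mul_of_nonneg_left (hmle _) (h2 c)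
      have e3 : (α₁ c + α₂ c) * m ≥ d * m :=
        mul_le_mul_of_nonpos_right (hsum c) hmneg.le
      have := h3 c
      nlinarith
    have : d * m ≤ m := le_csInf hne (by rintro x ⟨c, rfl⟩; exact key c)
    nlinarith
  have hw0 : ∀ c, 0 ≤ w c := fun c => le_trans hm0 (hmle c)
  -- contraction on positive parts of differences
  set g : ℕ → ℝ := fun c => max (w c - w (c + 1)) 0 with hg
  set M := sSup (Set.range g) with hM
  have hgne : (Set.range g).Nonempty := ⟨g 0, 0, rfl⟩
  have hgbdd : BddAbove (Set.range g) := by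
    refine ⟨2 * B, ?_⟩
    rintro x ⟨c, rfl⟩
    have := hB 0
    have := abs_nonneg (w 0)
    simp only [hg]
    have := hwhi c; have := hwlo (c + 1)
    refine max_le (by linarith) (by linarith)
  have hgM : ∀ c, g c ≤ M := fun c => le_csSup hgbdd ⟨c, rfl⟩
  have hM0 : 0 ≤ M := le_trans (le_max_right _ _) (hgM 0)
  have hdiff : ∀ c, w c - w (c + 1) ≤ M := fun c => le_trans (le_max_left _ _) (hgM c)
  have key : ∀ c, g c ≤ d * M := by
    intro c
    refine max_le ?_ (mul_nonneg hd0 hM0)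
    have hc := hw c
    have hc1 := hw (c + 1)
    simp only [Nat.add_sub_cancel] at hc1
    rcases le_total lam (α₁ (c + 1) * w (c + 1 + 1) + α₂ (c + 1) * w c + α₃ (c + 1)) with h | h
    · rw [min_eq_right h] at hc1
      have h2' : w c ≤ lam := hc ▸ min_le_right _ _
      nlinarith
    · rw [min_eq_left h] at hc1
      have hA : w c ≤ α₁ c * w (c + 1) + α₂ c * w (c - 1) + α₃ c := hc ▸ min_le_left _ _
      have t1 : α₁ c * w (c + 1) - α₁ (c + 1) * w (c + 1 + 1) ≤ α₁ c * M := by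
        have e1 : α₁ c * w (c + 1 + 1) ≤ α₁ (c + 1) * w (c + 1 + 1) :=
          mul_le_mul_of_nonneg_right (hm1 (Nat.le_succ c)) (hw0 _)
        have e2 : α₁ c * (w (c + 1) - w (c + 1 + 1)) ≤ α₁ c * M :=
          mul_le_mul_of_nonneg_left (hdiff (c + 1)) (h1 c)
        nlinarith
      have t2 : α₂ c * w (c - 1) - α₂ (c + 1) * w c ≤ α₂ c * M := by
        have e1 : α₂ c * w c ≤ α₂ (c + 1) * w c :=
          mul_le_mul_of_nonneg_right (hm2 (Nat.le_succ c)) (hw0 _)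
        have e2 : w (c - 1) - w c ≤ M := by
          cases c with
          | zero => simpa using hM0
          | succ k => simpa using hdiff k
        have e3 : α₂ c * (w (c - 1) - w c) ≤ α₂ c * M :=
          mul_le_mul_of_nonneg_left e2 (h2 c)
        nlinarith
      have t3 : α₃ c ≤ α₃ (c + 1) := hm3 (Nat.le_succ c)
      have t4 : (α₁ c + α₂ c) * M ≤ d * M := mul_le_mul_of_nonneg_right (hsum c) hM0
      nlinarith
  have hMle : M ≤ d * M := csSup_le hgne (by rintro x ⟨c, rfl⟩; exact key c)
  have hMneg : M ≤ 0 := by nlinarith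
  apply monotone_nat_of_le_succ
  intro c
  have := le_trans (hdiff c) hMneg
  linarith
end

section
/- In the epidemic model: the function V(0, c, i) = i/(η + κ_r) is the unique bounded solution on ℕ × ℕ_{S+I} of the system V(0,c,i) = [ρ_b(c)·V(0,c+1,i) + ρ_d(c)·V(0,c−1,i) + i·κ_r·V(0,c,i−1) + i] / (η + ρ_b(c) + ρ_d(c) + i·κ_r), where ρ_b, ρ_d : ℕ → ℝ are nonnegative bounded functions with ρ_b(0) = ρ_d(0) = 0, κ_r > 0, η > 0, and V(0,c,−1) is irrelevant since the coefficient vanishes at i = 0. -/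
/-- in the epidemic model, `V(0,c,i) = i/(η+κ_r)` is the unique bounded solution
of the `s = 0` system on `ℕ × {0,…,S+I}`. -/
theorem stmt8 (S I : ℕ) (η κr : ℝ) (hη : 0 < η) (hκr : 0 < κr)
    (ρb ρd : ℕ → ℝ) (hρb : ∀ c, 0 ≤ ρb c) (hρd : ∀ c, 0 ≤ ρd c)
    (hρbbd : ∃ B, ∀ c, ρb c ≤ B) (hρdbd : ∃ B, ∀ c, ρd c ≤ B)
    (hρb0 : ρb 0 = 0) (hρd0 : ρd 0 = 0) :
    ((∀ c i, i ≤ S + I →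
        (i : ℝ) / (η + κr) =
          (ρb c * ((i : ℝ) / (η + κr)) + ρd c * ((i : ℝ) / (η + κr)) +
              (i : ℝ) * κr * (((i - 1 : ℕ) : ℝ) / (η + κr)) + (i : ℝ)) /
            (η + ρb c + ρd c + (i : ℝ) * κr)) ∧
      ∀ W : ℕ → ℕ → ℝ,
        (∃ B, ∀ c i, i ≤ S + I → |W c i| ≤ B) →
        (∀ c i, i ≤ S + I →
          W c i =
            (ρb c * W (c + 1) i + ρd c * W (c - 1) i + (i : ℝ) * κr * W c (i - 1) + (i : ℝ)) /
              (η + ρb c + ρd c + (i : ℝ) * κr)) →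
        ∀ c i, i ≤ S + I → W c i = (i : ℝ) / (η + κr)) := by
  have hηκ : (0:ℝ) < η + κr := by linarith
  have hden : ∀ c (i : ℕ), (0:ℝ) < η + ρb c + ρd c + (i : ℝ) * κr := by
    intro c i
    have h1 := hρb c; have h2 := hρd c
    have h3 : (0:ℝ) ≤ (i:ℝ) * κr := by positivity
    linarith
  have hkey : ∀ c i, i ≤ S + I →
      (i : ℝ) / (η + κr) =
        (ρb c * ((i : ℝ) / (η + κr)) + ρd c * ((i : ℝ) / (η + κr)) +
            (i : ℝ) * κr * (((i - 1 : ℕ) : ℝ) / (η + κr)) + (i : ℝ)) /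
          (η + ρb c + ρd c + (i : ℝ) * κr) := by
    intro c i hi
    have hd := hden c i
    rcases i with _ | n
    · simp
    · have h1 : (((n + 1 - 1 : ℕ)) : ℝ) = (n : ℝ) := by simp
      rw [h1]
      push_cast at hd ⊢
      field_simp
      ring
  refine ⟨hkey, ?_⟩
  rintro W ⟨B, hB⟩ hW c i hi
  obtain ⟨Bb, hBb⟩ := hρbbd
  obtain ⟨Bd, hBd⟩ := hρdbd
  have hBb0 : 0 ≤ Bb := le_trans (hρb 0) (hBb 0)
  have hBd0 : 0 ≤ Bd := le_trans (hρd 0) (hBd 0)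
  set C : ℝ := Bb + Bd + (S + I : ℕ) * κr with hCdef
  have hC0 : 0 ≤ C := by positivity
  set q : ℝ := C / (η + C) with hqdef
  have hq0 : 0 ≤ q := by positivity
  have hq1 : q < 1 := by
    rw [hqdef, div_lt_one (by linarith)]; linarith
  have hB0 : 0 ≤ B := le_trans (abs_nonneg _) (hB 0 0 (Nat.zero_le _))
  set M : ℝ := B + (S + I : ℕ) / (η + κr) with hMdef
  have hM0 : 0 ≤ M := by positivity
  -- geometric decay of the deviation
  have main : ∀ n, ∀ c i, i ≤ S + I → |W c i - (i : ℝ) / (η + κr)| ≤ q ^ n * M := by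
    intro n
    induction n with
    | zero =>
      intro c i hi
      simp only [pow_zero, one_mul]
      have h1 : |W c i - (i : ℝ) / (η + κr)| ≤ |W c i| + |(i : ℝ) / (η + κr)| :=
        abs_sub _ _
      have h2 : |(i : ℝ) / (η + κr)| ≤ (S + I : ℕ) / (η + κr) := by
        rw [abs_of_nonneg (by positivity)]
        gcongr
        all_goals exact_mod_cast hi
      calc |W c i - (i:ℝ)/(η+κr)| ≤ |W c i| + |(i:ℝ)/(η+κr)| := h1
        _ ≤ B + (S + I : ℕ) / (η + κr) := add_le_add (hB c i hi) h2
    | succ n ih =>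
      intro c i hi
      have hd := hden c i
      have e1 : W c i * (η + ρb c + ρd c + (i : ℝ) * κr) =
          ρb c * W (c + 1) i + ρd c * W (c - 1) i + (i : ℝ) * κr * W c (i - 1) + (i : ℝ) := by
        rw [hW c i hi]; field_simp
      have e2 : ((i : ℝ) / (η + κr)) * (η + ρb c + ρd c + (i : ℝ) * κr) =
          ρb c * ((i : ℝ) / (η + κr)) + ρd c * ((i : ℝ) / (η + κr)) +
            (i : ℝ) * κr * (((i - 1 : ℕ) : ℝ) / (η + κr)) + (i : ℝ) := by
        exact (eq_div_iff hd.ne').mp (hkey c i hi)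
      have hE : W c i - (i : ℝ) / (η + κr) =
          (ρb c * (W (c + 1) i - (i : ℝ) / (η + κr)) +
            ρd c * (W (c - 1) i - (i : ℝ) / (η + κr)) +
            (i : ℝ) * κr * (W c (i - 1) - ((i - 1 : ℕ) : ℝ) / (η + κr))) /
          (η + ρb c + ρd c + (i : ℝ) * κr) := by
        rw [eq_div_iff hd.ne']
        linear_combination e1 - e2
      have hi1 : i - 1 ≤ S + I := le_trans (Nat.sub_le i 1) hi
      have a1 := ih (c + 1) i hi
      have a2 := ih (c - 1) i hi
      have a3 := ih c (i - 1) hi1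
      have hnum : |ρb c * (W (c + 1) i - (i : ℝ) / (η + κr)) +
            ρd c * (W (c - 1) i - (i : ℝ) / (η + κr)) +
            (i : ℝ) * κr * (W c (i - 1) - ((i - 1 : ℕ) : ℝ) / (η + κr))| ≤
          (ρb c + ρd c + (i : ℝ) * κr) * (q ^ n * M) := by
        have hik : (0:ℝ) ≤ (i : ℝ) * κr := by positivity
        calc (|ρb c * (W (c + 1) i - (i : ℝ) / (η + κr)) +
            ρd c * (W (c - 1) i - (i : ℝ) / (η + κr)) +
            (i : ℝ) * κr * (W c (i - 1) - ((i - 1 : ℕ) : ℝ) / (η + κr))|) ≤ |ρb c * (W (c + 1) i - (i : ℝ) / (η + κr)) +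
              ρd c * (W (c - 1) i - (i : ℝ) / (η + κr))| +
              |(i : ℝ) * κr * (W c (i - 1) - ((i - 1 : ℕ) : ℝ) / (η + κr))| := abs_add_le _ _
          _ ≤ |ρb c * (W (c + 1) i - (i : ℝ) / (η + κr))| +
              |ρd c * (W (c - 1) i - (i : ℝ) / (η + κr))| +
              |(i : ℝ) * κr * (W c (i - 1) - ((i - 1 : ℕ) : ℝ) / (η + κr))| := by
              gcongr; exact abs_add_le _ _
          _ = ρb c * |W (c + 1) i - (i : ℝ) / (η + κr)| +
              ρd c * |W (c - 1) i - (i : ℝ) / (η + κr)| +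
              ((i : ℝ) * κr) * |W c (i - 1) - ((i - 1 : ℕ) : ℝ) / (η + κr)| := by
              rw [abs_mul, abs_mul, abs_mul, abs_of_nonneg (hρb c),
                abs_of_nonneg (hρd c), abs_of_nonneg hik]
          _ ≤ ρb c * (q ^ n * M) + ρd c * (q ^ n * M) + ((i : ℝ) * κr) * (q ^ n * M) := by
              have hb := hρb c; have hd' := hρd c
              gcongr <;> assumption
          _ = (ρb c + ρd c + (i : ℝ) * κr) * (q ^ n * M) := by ring
      have hxC : ρb c + ρd c + (i : ℝ) * κr ≤ C := by
        have : (i : ℝ) * κr ≤ (S + I : ℕ) * κr := by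
          have : (i : ℝ) ≤ (S + I : ℕ) := by exact_mod_cast hi
          nlinarith
        have := hBb c; have := hBd c
        rw [hCdef]; linarith
      rw [hE, abs_div, abs_of_pos hd]
      have hqM : 0 ≤ q ^ n * M := by positivity
      calc (|ρb c * (W (c + 1) i - (i : ℝ) / (η + κr)) +
            ρd c * (W (c - 1) i - (i : ℝ) / (η + κr)) +
            (i : ℝ) * κr * (W c (i - 1) - ((i - 1 : ℕ) : ℝ) / (η + κr))|) / (η + ρb c + ρd c + (i : ℝ) * κr)
          ≤ (ρb c + ρd c + (i : ℝ) * κr) * (q ^ n * M) /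
            (η + ρb c + ρd c + (i : ℝ) * κr) := by gcongr
        _ ≤ q ^ (n + 1) * M := by
            rw [div_le_iff₀ hd, pow_succ]
            have hq : q * (η + (ρb c + ρd c + (i : ℝ) * κr)) ≥ ρb c + ρd c + (i : ℝ) * κr := by
              rw [hqdef, ge_iff_le, ← sub_nonneg]
              have h : C / (η + C) * (η + (ρb c + ρd c + (i : ℝ) * κr)) -
                  (ρb c + ρd c + (i : ℝ) * κr) =
                  (C - (ρb c + ρd c + (i : ℝ) * κr)) * η / (η + C) := by
                field_simp; ring
              rw [h]
              have : 0 ≤ C - (ρb c + ρd c + (i : ℝ) * κr) := by linarith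
              positivity
            refine le_trans (mul_le_mul_of_nonneg_right hq.le hqM) (le_of_eq ?_)
            ring
  -- pass to the limit
  have hlim : Filter.Tendsto (fun n => q ^ n * M) Filter.atTop (nhds 0) := by
    have := (tendsto_pow_atTop_nhds_zero_of_lt_one hq0 hq1).mul_const M
    simpa using this
  have habs : |W c i - (i : ℝ) / (η + κr)| ≤ 0 :=
    ge_of_tendsto' hlim (fun n => main n c i hi)
  have := abs_nonpos_iff.mp habs
  linarith [this]
end

section
/- In the epidemic model, suppose v : ℕ → ℝ is a bounded solution of v(c) = min( [ρ_b(c)·v(c+1) + ρ_d(c)·v(c−1) + κ_i(c)/(η+κ_r)] / (η + ρ_b(c) + ρ_d(c) + κ_i(c)), λ ) for c ∈ ℕ (with ρ_b(0) = ρ_d(0) = κ_i(0) = 0). Then V(s,c,i) := s·v(c) + i/(η+κ_r) is a bounded solution on ℕ_S × ℕ × ℕ_{S+I} of the impulsive Bellman equation: for s > 0, min{ −ηV(s,c,i) + ρ_b(c)V(s,c+1,i) + ρ_d(c)V(s,c−1,i) + s·κ_i(c)·V(s−1,c,i+1) + i·κ_r·V(s,c,i−1) − V(s,c,i)[ρ_b(c)+ρ_d(c)+s·κ_i(c)+i·κ_r]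 + i ; −V(s,c,i) + V(s−1,c,i) + λ } = 0, and for s = 0 the first expression alone equals 0. Moreover for each c, the first expression in the c-equation attains the minimum if and only if the first expression in the (s,c,i)-equation is zero (for s > 0). -/
/-- if `v` is a bounded solution of the reduced one-dimensional equation, then
`V(s,c,i) = s·v(c) + i/(η+κ_r)` is a bounded solution of the impulsive Bellman equation of the
epidemic model, and the first expressions attain the minimum/vanish consistently. -/
theorem stmt9 (S I : ℕ) (η κr lam : ℝ) (hη : 0 < η) (hκr : 0 < κr) (hlam : 0 < lam)
    (ρb ρd κi : ℕ → ℝ)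
    (hρb : ∀ c, 0 ≤ ρb c) (hρd : ∀ c, 0 ≤ ρd c) (hκi : ∀ c, 0 ≤ κi c)
    (hρbbd : ∃ B, ∀ c, ρb c ≤ B) (hρdbd : ∃ B, ∀ c, ρd c ≤ B) (hκibd : ∃ B, ∀ c, κi c ≤ B)
    (hρb0 : ρb 0 = 0) (hρd0 : ρd 0 = 0) (hκi0 : κi 0 = 0)
    (v : ℕ → ℝ) (hvbd : ∃ B, ∀ c, |v c| ≤ B)
    (hv : ∀ c, v c = min ((ρb c * v (c + 1) + ρd c * v (c - 1) + κi c / (η + κr)) /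
        (η + ρb c + ρd c + κi c)) lam)
    (V : ℕ → ℕ → ℕ → ℝ)
    (hV : V = fun (s c i : ℕ) => (s : ℝ) * v c + (i : ℝ) / (η + κr))
    (E1 : ℕ → ℕ → ℕ → ℝ)
    (hE1 : ∀ s c i, E1 s c i =
      -η * V s c i + ρb c * V s (c + 1) i + ρd c * V s (c - 1) i +
        (s : ℝ) * κi c * V (s - 1) c (i + 1) + (i : ℝ) * κr * V s c (i - 1) -
        V s c i * (ρb c + ρd c + (s : ℝ) * κi c + (i : ℝ) * κr) + (i : ℝ))
    (E2 : ℕ → ℕ → ℕ → ℝ)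
    (hE2 : ∀ s c i, E2 s c i = -V s c i + V (s - 1) c i + lam) :
    (∃ B, ∀ s c i, s ≤ S → i ≤ S + I → |V s c i| ≤ B) ∧
    (∀ s c i, 1 ≤ s → s ≤ S → i ≤ S + I → min (E1 s c i) (E2 s c i) = 0) ∧
    (∀ c i, i ≤ S + I → E1 0 c i = 0) ∧
    (∀ s c i, 1 ≤ s → s ≤ S → i ≤ S + I →
      (v c = (ρb c * v (c + 1) + ρd c * v (c - 1) + κi c / (η + κr)) /
          (η + ρb c + ρd c + κi c) ↔ E1 s c i = 0)) := by
  have hηκ : (0:ℝ) < η + κr := by linarith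
  have hηκ' : η + κr ≠ 0 := ne_of_gt hηκ
  have hD : ∀ c, (0:ℝ) < η + ρb c + ρd c + κi c := by
    intro c; have := hρb c; have := hρd c; have := hκi c; linarith
  set N : ℕ → ℝ := fun c => ρb c * v (c + 1) + ρd c * v (c - 1) + κi c / (η + κr) with hNdef
  set D : ℕ → ℝ := fun c => η + ρb c + ρd c + κi c with hDdef
  have keyE1 : ∀ s c i, 1 ≤ s → E1 s c i = (s:ℝ) * (N c - v c * D c) := by
    intro s c i hs
    obtain ⟨s', rfl⟩ := Nat.exists_eq_add_of_le hs
    rcases i with _ | i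
    · rw [hE1, hV]
      simp only [hNdef, hDdef, Nat.add_sub_cancel_left, Nat.add_sub_cancel, Nat.zero_sub]
      push_cast
      field_simp
      ring
    · rw [hE1, hV]
      simp only [hNdef, hDdef, Nat.add_sub_cancel_left, Nat.add_sub_cancel]
      push_cast
      field_simp
      ring
  have keyE2 : ∀ s c i, 1 ≤ s → E2 s c i = lam - v c := by
    intro s c i hs
    obtain ⟨s', rfl⟩ := Nat.exists_eq_add_of_le hs
    rw [hE2, hV]
    simp only [Nat.add_sub_cancel_left]
    push_cast
    ring
  have hvlam : ∀ c, v c ≤ lam := by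
    intro c; rw [hv c]; exact min_le_right _ _
  have hvN : ∀ c, 0 ≤ N c - v c * D c := by
    intro c
    have h1 : v c ≤ N c / D c := by rw [hv c]; exact min_le_left _ _
    have h2 : v c * D c ≤ N c := (le_div_iff₀ (hD c)).mp h1
    linarith
  have hchoice : ∀ c, v c = N c / D c ∨ v c = lam := by
    intro c; rw [hv c]; exact min_choice _ _
  refine ⟨?_, ?_, ?_, ?_⟩
  · obtain ⟨B, hB⟩ := hvbd
    refine ⟨(S:ℝ) * B + ((S:ℝ) + (I:ℝ)) / (η + κr), ?_⟩
    intro s c i hs hi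
    have hB0 : 0 ≤ B := le_trans (abs_nonneg _) (hB 0)
    rw [hV]
    have h1 : |(s:ℝ) * v c + (i:ℝ) / (η + κr)| ≤ (s:ℝ) * |v c| + (i:ℝ) / (η + κr) := by
      calc |(s:ℝ) * v c + (i:ℝ) / (η + κr)| ≤ |(s:ℝ) * v c| + |(i:ℝ) / (η + κr)| :=
            abs_add_le _ _
        _ = (s:ℝ) * |v c| + (i:ℝ) / (η + κr) := by
            rw [abs_mul, abs_of_nonneg (Nat.cast_nonneg s),
              abs_of_nonneg (div_nonneg (Nat.cast_nonneg i) hηκ.le)]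
    have h2 : (s:ℝ) * |v c| ≤ (S:ℝ) * B := by
      apply mul_le_mul (Nat.cast_le.mpr hs) (hB c) (abs_nonneg _) (Nat.cast_nonneg S)
    have h3 : (i:ℝ) / (η + κr) ≤ ((S:ℝ) + (I:ℝ)) / (η + κr) := by
      gcongr
      exact_mod_cast hi
    linarith
  · intro s c i hs hS hi
    rw [keyE1 s c i hs, keyE2 s c i hs]
    have hs0 : (0:ℝ) ≤ (s:ℝ) := Nat.cast_nonneg s
    rcases hchoice c with h | h
    · have hF : N c - v c * D c = 0 := by
        rw [h, div_mul_cancel₀ _ (ne_of_gt (hD c))]; ring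
      rw [hF, mul_zero]
      have : 0 ≤ lam - v c := by have := hvlam c; linarith
      exact min_eq_left this
    · have h2 : lam - v c = 0 := by rw [h]; ring
      rw [h2]
      exact min_eq_right (mul_nonneg hs0 (hvN c))
  · intro c i hi
    rcases i with _ | i
    · rw [hE1, hV]
      simp only [Nat.zero_sub]
      push_cast
      ring
    · rw [hE1, hV]
      simp only [Nat.zero_sub, Nat.add_sub_cancel]
      push_cast
      field_simp
      ring
  · intro s c i hs hS hi
    rw [keyE1 s c i hs]
    have hs0 : (0:ℝ) < (s:ℝ) := by exact_mod_cast hs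
    constructor
    · intro h
      have hF : N c - v c * D c = 0 := by
        rw [h, div_mul_cancel₀ _ (ne_of_gt (hD c))]; ring
      rw [hF, mul_zero]
    · intro h
      rcases mul_eq_zero.mp h with h' | h'
      · exact absurd h' (ne_of_gt hs0)
      · have : v c * D c = N c := by linarith
        rw [eq_div_iff (ne_of_gt (hD c))]
        exact this
end

section
/- In the epidemic model with functions α₁(c) = ρ_b(c)/(η+ρ_b(c)+ρ_d(c)+κ_i(c)), α₂(c) = ρ_d(c)/(η+ρ_b(c)+ρ_d(c)+κ_i(c)), α₃(c) = (κ_i(c)/(η+κ_r))/(η+ρ_b(c)+ρ_d(c)+κ_i(c)), suppose α₁, α₂, α₃ are increasing, the limits ζⱼ = lim_{c→∞} αⱼ(c) exist, and lim_{c→∞} κ_i(c) = κ∞ exists. Then the critical threshold λ* = ζ₃/(1 − ζ₁ − ζ₂) equals (κ∞/(η+κ_r))/(η + κ∞); in particular λ* does not depend on ρ_b and ρ_d. -/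
/-- the critical threshold `λ* = ζ₃/(1 - ζ₁ - ζ₂)` of the epidemic model equals
`(κ∞/(η+κ_r))/(η+κ∞)`; in particular it does not depend on `ρ_b` and `ρ_d`. -/
theorem stmt10 (η κr : ℝ) (hη : 0 < η) (hκr : 0 < κr)
    (ρb ρd κi : ℕ → ℝ)
    (hρb : ∀ c, 0 ≤ ρb c) (hρd : ∀ c, 0 ≤ ρd c) (hκi : ∀ c, 0 ≤ κi c)
    (hρbbd : ∃ B, ∀ c, ρb c ≤ B) (hρdbd : ∃ B, ∀ c, ρd c ≤ B) (hκibd : ∃ B, ∀ c, κi c ≤ B)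
    (hρb0 : ρb 0 = 0) (hρd0 : ρd 0 = 0) (hκi0 : κi 0 = 0)
    (α₁ α₂ α₃ : ℕ → ℝ)
    (hα₁ : ∀ c, α₁ c = ρb c / (η + ρb c + ρd c + κi c))
    (hα₂ : ∀ c, α₂ c = ρd c / (η + ρb c + ρd c + κi c))
    (hα₃ : ∀ c, α₃ c = (κi c / (η + κr)) / (η + ρb c + ρd c + κi c))
    (hm1 : Monotone α₁) (hm2 : Monotone α₂) (hm3 : Monotone α₃)
    (ζ₁ ζ₂ ζ₃ κinf : ℝ)
    (hl1 : Filter.Tendsto α₁ Filter.atTop (nhds ζ₁))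
    (hl2 : Filter.Tendsto α₂ Filter.atTop (nhds ζ₂))
    (hl3 : Filter.Tendsto α₃ Filter.atTop (nhds ζ₃))
    (hlκ : Filter.Tendsto κi Filter.atTop (nhds κinf)) :
    ζ₃ / (1 - ζ₁ - ζ₂) = (κinf / (η + κr)) / (η + κinf) := by

  obtain ⟨Bb, hBb⟩ := hρbbd
  obtain ⟨Bd, hBd⟩ := hρdbd
  obtain ⟨Bk, hBk⟩ := hκibd
  have hD : ∀ c, 0 < η + ρb c + ρd c + κi c := fun c => by
    have := hρb c; have := hρd c; have := hκi c; linarith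
  have key : ∀ c, α₃ c * (η + κi c) = (κi c / (η + κr)) * (1 - α₁ c - α₂ c) := by
    intro c
    rw [hα₁ c, hα₂ c, hα₃ c]
    have h1 := (hD c).ne'
    have h2 : η + κr ≠ 0 := by linarith
    field_simp
    ring_nf
  have hEq : ζ₃ * (η + κinf) = (κinf / (η + κr)) * (1 - ζ₁ - ζ₂) := by
    have t1 : Filter.Tendsto (fun c => α₃ c * (η + κi c)) Filter.atTop
        (nhds (ζ₃ * (η + κinf))) := hl3.mul (tendsto_const_nhds.add hlκ)
    have t2 : Filter.Tendsto (fun c => (κi c / (η + κr)) * (1 - α₁ c - α₂ c)) Filter.atTop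
        (nhds ((κinf / (η + κr)) * (1 - ζ₁ - ζ₂))) :=
      (hlκ.div_const _).mul ((tendsto_const_nhds.sub hl1).sub hl2)
    exact tendsto_nhds_unique (t1.congr (fun c => key c)) t2
  have hκinf : 0 ≤ κinf := ge_of_tendsto' hlκ hκi
  have hden : 0 < 1 - ζ₁ - ζ₂ := by
    have hB : 0 < η + Bb + Bd + Bk := by
      have := (hρb 0).trans (hBb 0); have := (hρd 0).trans (hBd 0)
      have := (hκi 0).trans (hBk 0); linarith
    have hlow : ∀ c, η / (η + Bb + Bd + Bk) ≤ 1 - α₁ c - α₂ c := by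
      intro c
      have h1 : 1 - α₁ c - α₂ c = (η + κi c) / (η + ρb c + ρd c + κi c) := by
        rw [hα₁ c, hα₂ c]
        field_simp [(hD c).ne']
        ring
      rw [h1]
      have hk := hκi c
      calc η / (η + Bb + Bd + Bk) ≤ η / (η + ρb c + ρd c + κi c) := by
            apply div_le_div_of_nonneg_left hη.le (hD c)
            have := hBb c; have := hBd c; have := hBk c; linarith
        _ ≤ (η + κi c) / (η + ρb c + ρd c + κi c) := by
            gcongr <;> linarith [hD c]
    have := ge_of_tendsto' ((tendsto_const_nhds.sub hl1).sub hl2) hlow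
    have : 0 < η / (η + Bb + Bd + Bk) := div_pos hη hB
    linarith [ge_of_tendsto' ((tendsto_const_nhds.sub hl1).sub hl2) hlow]
  have hηκ : 0 < η + κinf := by linarith
  rw [div_eq_div_iff hden.ne' hηκ.ne']
  linarith [hEq]
end
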